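/- Let f : ℝ → ℝ be of class C⁶ and let x ∈ ℝ. Then, as h → 0 (h ≠ 0), the quantity (1/(48h²))·[−5f(x − 5h/2) + 39f(x − 3h/2) − 34f(x − h/2) − 34f(x + h/2) + 39f(x + 3h/2) − 5f(x + 5h/2)] − f''(x) is O(h⁴); i.e., the six-point stencil centered at x used for the second-derivative correction term of the fifth-order A-WENO flux is a fourth-order accurate approximation of f''(x). -/

import Mathlib

open Filter Topology

open Asymptotics Nat

/-!
The `k`-th derivative in `h` at `h = 0` of a stencil `∑ᵢ cᵢ f (x + aᵢ h)` is `(∑ᵢ cᵢ aᵢᵏ) f⁽ᵏ⁾(x)`.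
The A-WENO weights have moments `∑ᵢ cᵢ aᵢᵏ = 0, 0, 2, 0, 0, 0` for `k = 0, …, 5`, so
`stencil(h) - h² f''(x)` has vanishing derivatives of all orders `< 6` at `0`. By Taylor's theorem
it is therefore `O(h⁶)`, and dividing by `h²` gives the `O(h⁴)` error.
-/

variable {E : Type*} [NormedAddCommGroup E] [NormedSpace ℝ E]

theorem isBigO_sub_pow_of_iteratedDeriv_eq_zero {n : ℕ} {g : ℝ → E} {x₀ : ℝ}
    (hg : ContDiff ℝ n g) (hvanish : ∀ k < n, iteratedDeriv k g x₀ = 0) :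
    g =O[𝓝 x₀] fun x => (x - x₀) ^ n := by
  have htaylor : taylorWithinEval g n Set.univ x₀ =
      fun x => ((n ! : ℝ)⁻¹ * (x - x₀) ^ n) • iteratedDeriv n g x₀ := by
    ext x
    rw [taylor_within_apply, Finset.sum_range_succ, Finset.sum_eq_zero, zero_add,
      iteratedDerivWithin_univ]
    intro k hk
    rw [iteratedDerivWithin_univ, hvanish k (Finset.mem_range.mp hk), smul_zero]
  have hleading : taylorWithinEval g n Set.univ x₀ =O[𝓝 x₀] fun x => (x - x₀) ^ n := by
    rw [htaylor]
    refine isBigO_iff.mpr ⟨(n ! : ℝ)⁻¹ * ‖iteratedDeriv n g x₀‖, .of_forall fun x => ?_⟩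
    rw [norm_smul, norm_mul, norm_inv, Real.norm_natCast]
    exact (by ring : _ = _).le
  simpa using (taylor_isLittleO_univ hg).isBigO.add hleading

theorem iteratedDeriv_comp_const_add_mul {k : ℕ} {f : ℝ → E} (hf : ContDiff ℝ k f)
    (x a t : ℝ) :
    iteratedDeriv k (fun h => f (x + a * h)) t = a ^ k • iteratedDeriv k f (x + a * t) := by
  have hshift : ContDiff ℝ k fun z => f (x + z) := hf.comp (contDiff_const.add contDiff_id)
  rw [iteratedDeriv_comp_const_smul hshift a, iteratedDeriv_comp_const_add]

def stencil {ι : Type*} [Fintype ι] (c a : ι → ℝ) (f : ℝ → E) (x h : ℝ) : E :=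
  ∑ i, c i • f (x + a i * h)

section Stencil

variable {ι : Type*} [Fintype ι] (c a : ι → ℝ) {f : ℝ → E} (x : ℝ)

theorem contDiff_stencil {n : WithTop ℕ∞} (hf : ContDiff ℝ n f) :
    ContDiff ℝ n (stencil c a f x) :=
  ContDiff.sum fun _ _ =>
    contDiff_const.smul (hf.comp (contDiff_const.add (contDiff_const.mul contDiff_id)))

theorem iteratedDeriv_stencil_zero {k : ℕ} (hf : ContDiff ℝ k f) :
    iteratedDeriv k (stencil c a f x) 0 = (∑ i, c i * a i ^ k) • iteratedDeriv k f x := by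
  have hterm (i : ι) : ContDiff ℝ k fun h => f (x + a i * h) :=
    hf.comp (contDiff_const.add (contDiff_const.mul contDiff_id))
  unfold stencil
  rw [iteratedDeriv_fun_sum fun i _ => ((hterm i).const_smul (c i)).contDiffAt, Finset.sum_smul]
  refine Finset.sum_congr rfl fun i _ => ?_
  rw [iteratedDeriv_fun_const_smul_field, iteratedDeriv_comp_const_add_mul hf,
    mul_zero, add_zero, smul_smul]

theorem stencil_sub_isBigO {n p : ℕ} (hf : ContDiff ℝ n f)
    (hmoment : ∀ k < n, ∑ i, c i * a i ^ k = if k = p then (p ! : ℝ) else 0) :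
    (fun h => stencil c a f x h - h ^ p • iteratedDeriv p f x) =O[𝓝 0] fun h => h ^ n := by
  have hmonomial (m : WithTop ℕ∞) : ContDiff ℝ m fun h : ℝ => h ^ p • iteratedDeriv p f x :=
    (contDiff_id.pow p).smul contDiff_const
  suffices hvanish : ∀ k < n,
      iteratedDeriv k (fun h => stencil c a f x h - h ^ p • iteratedDeriv p f x) 0 = 0 by
    simpa using isBigO_sub_pow_of_iteratedDeriv_eq_zero
      ((contDiff_stencil c a x hf).sub (hmonomial n)) hvanish
  intro k hk
  have hfk : ContDiff ℝ k f := hf.of_le (by exact_mod_cast hk.le)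
  rw [iteratedDeriv_fun_sub (contDiff_stencil c a x hfk).contDiffAt (hmonomial k).contDiffAt,
    iteratedDeriv_stencil_zero c a x hfk, hmoment k hk,
    iteratedDeriv_smul_const (contDiff_id.pow p).contDiffAt, iteratedDeriv_fun_pow_zero]
  split_ifs with hkp
  · subst hkp; simp
  · simp

theorem stencil_div_pow_sub_isBigO {n p : ℕ} (hpn : p ≤ n) (hf : ContDiff ℝ n f)
    (hmoment : ∀ k < n, ∑ i, c i * a i ^ k = if k = p then (p ! : ℝ) else 0) :
    (fun h => (h ^ p)⁻¹ • stencil c a f x h - iteratedDeriv p f x)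
      =O[𝓝[≠] 0] fun h => h ^ (n - p) := by
  have hrescaled := (isBigO_refl (fun h : ℝ => (h ^ p)⁻¹) (𝓝[≠] 0)).smul
    ((stencil_sub_isBigO c a x hf hmoment).mono nhdsWithin_le_nhds)
  refine hrescaled.congr' ?_ ?_ <;> filter_upwards [self_mem_nhdsWithin] with h (hh : h ≠ 0)
  · rw [smul_sub, smul_smul, inv_mul_cancel₀ (pow_ne_zero p hh), one_smul]
  · rw [pow_sub₀ h hh hpn, smul_eq_mul, mul_comm]

end Stencil

noncomputable def awenoWeights : Fin 6 → ℝ :=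
  ![-5 / 48, 39 / 48, -34 / 48, -34 / 48, 39 / 48, -5 / 48]

noncomputable def awenoNodes : Fin 6 → ℝ := ![-5 / 2, -3 / 2, -1 / 2, 1 / 2, 3 / 2, 5 / 2]

theorem awenoWeights_moment {k : ℕ} (hk : k < 6) :
    ∑ i, awenoWeights i * awenoNodes i ^ k = if k = 2 then ((2 : ℕ) ! : ℝ) else 0 := by
  simp only [awenoWeights, awenoNodes, Fin.sum_univ_six, Matrix.cons_val_zero, Matrix.cons_val_one,
    Matrix.cons_val]
  interval_cases k <;> norm_num

theorem awneo_second_derivative_stencil (f : ℝ → ℝ) (hf : ContDiff ℝ 6 f) (x : ℝ) :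
    (fun h : ℝ =>
        (1 / (48 * h ^ 2)) *
            (-5 * f (x - 5 * h / 2) + 39 * f (x - 3 * h / 2) - 34 * f (x - h / 2)
              - 34 * f (x + h / 2) + 39 * f (x + 3 * h / 2) - 5 * f (x + 5 * h / 2))
          - iteratedDeriv 2 f x)
      =O[𝓝[≠] (0 : ℝ)] (fun h : ℝ => h ^ 4) := by
  refine (stencil_div_pow_sub_isBigO awenoWeights awenoNodes x (by norm_num) hf
    fun _ => awenoWeights_moment).congr_left fun h => ?_
  simp only [stencil, awenoWeights, awenoNodes, smul_eq_mul, Fin.sum_univ_six, Matrix.cons_val_zero,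
    Matrix.cons_val_one, Matrix.cons_val]
  ring_nf
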